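/- arXiv:2506.22536 — 3 statements merged into one kernel-verified Lean document; each statement's English description precedes it below -/
import Mathlib

section
/- Suppose μ > 0 and set λ = 1/2. Then for every α ∈ (0,1), the optimal policy asymptotically attains the maximal rejection probability over all policies: lim_{n→∞} P(|T_{n,1/2}(θ_n*)| > z_{1−α/2}) = 1 and lim_{n→∞} sup_{θ_n ∈ Θ} P(|T_{n,1/2}(θ_n)| > z_{1−α/2}) = 1; in particular lim_{n→∞} P(|T_{n,1/2}(θ_n*)| > z_{1−α/2}) = lim_{n→∞} sup_{θ_n ∈ Θ} P(|T_{n,1/2}(θ_n)| > z_{1−α/2}). -/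
open MeasureTheory ProbabilityTheory Filter

/-- Standard normal cumulative distribution function Φ. -/
noncomputable def stdNormalCDF (x : ℝ) : ℝ :=
  ∫ t in Set.Iic x, (1 / Real.sqrt (2 * Real.pi)) * Real.exp (-(t ^ 2) / 2)

/-- A policy `θ_n = (ϑ_1, …)`: a sequence of {0,1}-valued random variables such that `ϑ_1`
is independent of the reward sequence and, for `i ≥ 2`, `ϑ_i` is measurable with respect to
`σ(ϑ_1, R_1, …, R_{i-1})`. -/
structure Policy {Ω : Type*} [MeasurableSpace Ω] (P : Measure Ω) (R : ℕ → Ω → ℝ) where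
  ϑ : ℕ → Ω → ℝ
  meas : ∀ i, Measurable (ϑ i)
  vals : ∀ i ω, ϑ i ω = 0 ∨ ϑ i ω = 1
  indep_first : IndepFun (ϑ 1) (fun ω i => R i ω) P
  adapted : ∀ i, 2 ≤ i →
    @Measurable Ω ℝ (MeasurableSpace.comap (ϑ 1) inferInstance ⊔
      ⨆ j ∈ Set.Icc 1 (i - 1), MeasurableSpace.comap (R j) inferInstance) _ (ϑ i)

/-- The oracle weighted TAB statistic `T_{m,λ}(θ_n)` under a policy `ϑ`:
`T_0 = 0` and `T_m = T_{m-1} + (2ϑ_m - 1)(λμ/((1-λ)n) + R_m/(√n σ))`. -/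
noncomputable def Tstat {Ω : Type*} (R : ℕ → Ω → ℝ) (lam μ σ : ℝ) (n : ℕ)
    (ϑ : ℕ → Ω → ℝ) : ℕ → Ω → ℝ
  | 0 => fun _ => 0
  | m + 1 => fun ω =>
      Tstat R lam μ σ n ϑ m ω +
        (2 * ϑ (m + 1) ω - 1) * (lam * μ / ((1 - lam) * n) + R (m + 1) ω / (Real.sqrt n * σ))

/-- The statistic `T_{m,λ}(θ_n^*)` under the optimal policy `θ_n^*`, where `ξ` is the
fair-coin first action:  for `i ≥ 2`, `ϑ_i^* = 1` iff `T_{i-1,λ}(θ^*_{i-1}) ≥ 0`. -/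
noncomputable def Tstar {Ω : Type*} (R : ℕ → Ω → ℝ) (lam μ σ : ℝ) (n : ℕ)
    (ξ : Ω → ℝ) : ℕ → Ω → ℝ
  | 0 => fun _ => 0
  | 1 => fun ω => (2 * ξ ω - 1) * (lam * μ / ((1 - lam) * n) + R 1 ω / (Real.sqrt n * σ))
  | m + 2 => fun ω =>
      Tstar R lam μ σ n ξ (m + 1) ω +
        (2 * (if 0 ≤ Tstar R lam μ σ n ξ (m + 1) ω then (1 : ℝ) else 0) - 1) *
          (lam * μ / ((1 - lam) * n) + R (m + 2) ω / (Real.sqrt n * σ))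

/-- `ω_n = λμ/(1-λ) + √n μ/σ`. -/
noncomputable def omegaN (lam μ σ : ℝ) (n : ℕ) : ℝ :=
  lam * μ / (1 - lam) + Real.sqrt n * μ / σ

/-- `σ₀ = √(1 + μ²/σ²)`. -/
noncomputable def sigma0 (μ σ : ℝ) : ℝ := Real.sqrt (1 + μ ^ 2 / σ ^ 2)

/-!
Both probabilities are squeezed between 1 and the probability that the statistic of the policy
that always plays arm 1 exceeds `z`. That statistic equals `λμ/(1-λ) + (R_1 + ⋯ + R_n)/(√n σ)`:
its mean grows like `√n μ/σ` while its variance stays 1, so by Chebyshev's inequality it exceeds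
`z` with probability tending to 1. The optimal policy dominates it pathwise, since playing the arm
given by the sign of the running statistic makes `|T|` grow by at least each increment.
-/

open Finset Topology

lemma abs_add_le_abs_add_signed (T e : ℝ) :
    |T| + e ≤ |T + (2 * (if 0 ≤ T then (1 : ℝ) else 0) - 1) * e| := by
  split_ifs with hT
  · rw [abs_of_nonneg hT]
    linarith [le_abs_self (T + (2 * 1 - 1) * e)]
  · rw [abs_of_neg (not_le.1 hT)]
    linarith [neg_le_abs (T + (2 * 0 - 1) * e)]

section Statistics

variable {Ω : Type*} (R : ℕ → Ω → ℝ) (lam μ σ : ℝ) (n : ℕ)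

lemma Tstat_const_one_le_abs_Tstar {ξ : Ω → ℝ} (hξ : ∀ ω, ξ ω = 0 ∨ ξ ω = 1) (m : ℕ) (ω : Ω) :
    Tstat R lam μ σ n (fun _ _ => 1) m ω ≤ |Tstar R lam μ σ n ξ m ω| := by
  induction m using Nat.twoStepInduction with
  | zero => simp [Tstat, Tstar]
  | one =>
    have hsign : |2 * ξ ω - 1| = 1 := by rcases hξ ω with h | h <;> norm_num [h]
    norm_num [Tstat, Tstar, abs_mul, hsign]
    exact le_abs_self _
  | more m _ ih =>
    have hstep := abs_add_le_abs_add_signed (Tstar R lam μ σ n ξ (m + 1) ω)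
      (lam * μ / ((1 - lam) * n) + R (m + 2) ω / (Real.sqrt n * σ))
    simp only [Tstat, Tstar] at ih hstep ⊢
    linarith

lemma Tstat_const_one_eq (hn : n ≠ 0) (ω : Ω) :
    Tstat R lam μ σ n (fun _ _ => 1) n ω
      = lam * μ / (1 - lam) + (∑ k ∈ Icc 1 n, R k ω) / (Real.sqrt n * σ) := by
  have hsum (m : ℕ) : Tstat R lam μ σ n (fun _ _ => 1) m ω
      = ∑ k ∈ Icc 1 m, (lam * μ / ((1 - lam) * n) + R k ω / (Real.sqrt n * σ)) := by
    induction m with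
    | zero => simp [Tstat]
    | succ m ih => norm_num [Tstat, ih, sum_Icc_succ_top]
  rw [hsum, sum_add_distrib, sum_const, Nat.card_Icc, ← sum_div, nsmul_eq_mul, Nat.add_sub_cancel,
    ← div_div, mul_div_cancel₀ _ (Nat.cast_ne_zero.2 hn)]

end Statistics

section SumsOfIndependent

variable {Ω ι : Type*} [MeasurableSpace Ω] {P : Measure Ω} {X : ι → Ω → ℝ} {s : Finset ι}
  {μ σ : ℝ}

lemma measureReal_sum_le_card_mul_sub_le [IsFiniteMeasure P] (hL2 : ∀ i ∈ s, MemLp (X i) 2 P)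
    (hindep : Set.Pairwise ↑s fun i j => IndepFun (X i) (X j) P)
    (hmean : ∀ i ∈ s, P[X i] = μ) (hvar : ∀ i ∈ s, variance (X i) P = σ ^ 2)
    {t : ℝ} (ht : 0 < t) :
    P.real {ω | ∑ i ∈ s, X i ω ≤ #s * μ - t} ≤ #s * σ ^ 2 / t ^ 2 := by
  have hsum_mean : P[∑ i ∈ s, X i] = #s * μ := by
    simp only [Finset.sum_apply]
    rw [integral_finsetSum _ fun i hi => (hL2 i hi).integrable one_le_two,
      sum_congr rfl hmean, sum_const, nsmul_eq_mul]
  have hsum_var : variance (∑ i ∈ s, X i) P = #s * σ ^ 2 := by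
    rw [IndepFun.variance_sum hL2 hindep, sum_congr rfl hvar, sum_const, nsmul_eq_mul]
  refine ENNReal.toReal_le_of_le_ofReal (by positivity) ?_
  calc P {ω | ∑ i ∈ s, X i ω ≤ #s * μ - t}
      ≤ P {ω | t ≤ |(∑ i ∈ s, X i) ω - P[∑ i ∈ s, X i]|} := by
        refine measure_mono fun ω (hω : ∑ i ∈ s, X i ω ≤ #s * μ - t) => ?_
        change t ≤ |_|
        rw [hsum_mean, Finset.sum_apply]
        exact le_abs.2 (Or.inr (by linarith))
    _ ≤ ENNReal.ofReal (#s * σ ^ 2 / t ^ 2) := by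
        rw [← hsum_var]
        exact meas_ge_le_variance_div_sq (memLp_finsetSum' s hL2) ht

end SumsOfIndependent

section AlwaysOne

variable {Ω : Type*} [MeasurableSpace Ω] {P : Measure Ω} [IsProbabilityMeasure P]
  {R : ℕ → Ω → ℝ} {μ σ : ℝ}

lemma one_sub_measureReal_lt_Tstat_const_one_le
    (hRmeas : ∀ i, Measurable (R i)) (hL2 : ∀ i, 1 ≤ i → MemLp (R i) 2 P)
    (hindep : Pairwise fun i j => IndepFun (R i) (R j) P)
    (hmean : ∀ i, 1 ≤ i → P[R i] = μ) (hvar : ∀ i, 1 ≤ i → variance (R i) P = σ ^ 2)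
    (hσ : 0 < σ) {lam z : ℝ} {n : ℕ} (hn : n ≠ 0)
    (hq : 0 < Real.sqrt n * μ + σ * (lam * μ / (1 - lam) - z)) :
    1 - P.real {ω | z < Tstat R lam μ σ n (fun _ _ => 1) n ω}
      ≤ σ ^ 2 / (Real.sqrt n * μ + σ * (lam * μ / (1 - lam) - z)) ^ 2 := by
  have hn_pos : (0 : ℝ) < n := Nat.cast_pos.2 (Nat.pos_of_ne_zero hn)
  have hscale : 0 < Real.sqrt n * σ := mul_pos (Real.sqrt_pos.2 hn_pos) hσ
  set t := Real.sqrt n * (Real.sqrt n * μ + σ * (lam * μ / (1 - lam) - z))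
  have ht : 0 < t := mul_pos (Real.sqrt_pos.2 hn_pos) hq
  have hA : MeasurableSet {ω | z < Tstat R lam μ σ n (fun _ _ => 1) n ω} := by
    refine measurableSet_lt measurable_const ?_
    rw [funext (Tstat_const_one_eq R lam μ σ n hn)]
    exact measurable_const.add ((Finset.measurable_sum _ fun k _ => hRmeas k).div_const _)
  rw [← probReal_compl_eq_one_sub hA]
  calc _ ≤ P.real {ω | ∑ k ∈ Icc 1 n, R k ω ≤ #(Icc 1 n) * μ - t} := by
        refine measureReal_mono fun ω hω => ?_
        simp only [Set.mem_compl_iff, Set.mem_ofPred_eq, not_lt, Tstat_const_one_eq R lam μ σ n hn,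
          ← le_sub_iff_add_le', div_le_iff₀ hscale] at hω
        change ∑ k ∈ Icc 1 n, R k ω ≤ _
        rw [Nat.card_Icc, Nat.add_sub_cancel]
        linear_combination hω + μ * Real.sq_sqrt hn_pos.le
    _ ≤ #(Icc 1 n) * σ ^ 2 / t ^ 2 :=
        measureReal_sum_le_card_mul_sub_le (fun i hi => hL2 i (mem_Icc.1 hi).1)
          (fun i _ j _ hij => hindep hij) (fun i hi => hmean i (mem_Icc.1 hi).1)
          (fun i hi => hvar i (mem_Icc.1 hi).1) ht
    _ = _ := by
        rw [Nat.card_Icc, Nat.add_sub_cancel, mul_pow, Real.sq_sqrt hn_pos.le,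
          mul_div_mul_left _ _ hn_pos.ne']

lemma tendsto_measureReal_lt_Tstat_const_one
    (hRmeas : ∀ i, Measurable (R i)) (hL2 : ∀ i, 1 ≤ i → MemLp (R i) 2 P)
    (hindep : Pairwise fun i j => IndepFun (R i) (R j) P)
    (hmean : ∀ i, 1 ≤ i → P[R i] = μ) (hvar : ∀ i, 1 ≤ i → variance (R i) P = σ ^ 2)
    (hμ : 0 < μ) (hσ : 0 < σ) (lam z : ℝ) :
    Tendsto (fun n : ℕ => P.real {ω | z < Tstat R lam μ σ n (fun _ _ => 1) n ω}) atTop (𝓝 1) := by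
  set q : ℕ → ℝ := fun n => Real.sqrt n * μ + σ * (lam * μ / (1 - lam) - z)
  have hq : Tendsto q atTop atTop :=
    tendsto_atTop_add_const_right _ _
      ((Real.tendsto_sqrt_atTop.comp tendsto_natCast_atTop_atTop).atTop_mul_const hμ)
  have hcompl : Tendsto (fun n : ℕ => 1 - P.real {ω | z < Tstat R lam μ σ n (fun _ _ => 1) n ω})
      atTop (𝓝 0) :=
    squeeze_zero' (Eventually.of_forall fun n => sub_nonneg.2 measureReal_le_one)
      (by filter_upwards [eventually_ne_atTop 0, hq.eventually_gt_atTop 0] with n hn hqn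
          exact one_sub_measureReal_lt_Tstat_const_one_le hRmeas hL2 hindep hmean hvar hσ hn hqn)
      (tendsto_const_nhds.div_atTop ((tendsto_pow_atTop two_ne_zero).comp hq))
  simpa using (tendsto_const_nhds (x := (1 : ℝ))).sub hcompl

end AlwaysOne

def Policy.constOne {Ω : Type*} [MeasurableSpace Ω] (P : Measure Ω) [IsZeroOrProbabilityMeasure P]
    (R : ℕ → Ω → ℝ) :
    Policy P R where
  ϑ _ _ := 1
  meas _ := measurable_const
  vals _ _ := Or.inr rfl
  indep_first := by
    rw [IndepFun_iff_Indep, MeasurableSpace.comap_const]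
    exact indep_bot_left _
  adapted _ _ := measurable_const

theorem stmt0_general
    {Ω : Type*} [MeasurableSpace Ω] (P : Measure Ω) [IsProbabilityMeasure P]
    (R : ℕ → Ω → ℝ) (M μ σ : ℝ)
    (hRmeas : ∀ i, Measurable (R i))
    (hiid : iIndepFun R P)
    (hident : ∀ i, 1 ≤ i → Measure.map (R i) P = Measure.map (R 1) P)
    (hbdd : ∀ i, 1 ≤ i → ∀ᵐ ω ∂P, |R i ω| ≤ M)
    (hμ : μ = ∫ ω, R 1 ω ∂P)
    (hσ : 0 < σ) (hvar : σ ^ 2 = ∫ ω, (R 1 ω - μ) ^ 2 ∂P)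
    (hμpos : 0 < μ)
    (ξ : Ω → ℝ) (hξvals : ∀ ω, ξ ω = 0 ∨ ξ ω = 1)
    (z : ℝ) :
    Tendsto (fun n : ℕ => (P {ω | z < |Tstar R (1 / 2) μ σ n ξ n ω|}).toReal)
        atTop (nhds 1) ∧
      Tendsto (fun n : ℕ =>
          ⨆ θ : Policy P R, (P {ω | z < |Tstat R (1 / 2) μ σ n θ.ϑ n ω|}).toReal)
        atTop (nhds 1) := by
  have hdist (i : ℕ) (hi : 1 ≤ i) : IdentDistrib (R i) (R 1) P P :=
    ⟨(hRmeas i).aemeasurable, (hRmeas 1).aemeasurable, hident i hi⟩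
  have hL2 (i : ℕ) (hi : 1 ≤ i) : MemLp (R i) 2 P :=
    .of_bound (hRmeas i).aestronglyMeasurable M (by simpa only [Real.norm_eq_abs] using hbdd i hi)
  have hmean (i : ℕ) (hi : 1 ≤ i) : P[R i] = μ := (hdist i hi).integral_eq.trans hμ.symm
  have hvariance (i : ℕ) (hi : 1 ≤ i) : variance (R i) P = σ ^ 2 := by
    rw [(hdist i hi).variance_eq, variance_eq_integral (hRmeas 1).aemeasurable, ← hμ, hvar]
  have hlim := tendsto_measureReal_lt_Tstat_const_one hRmeas hL2
    (fun _ _ hij => hiid.indepFun hij) hmean hvariance hμpos hσ (1 / 2) z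
  have hbddAbove (n : ℕ) : BddAbove (Set.range fun θ : Policy P R =>
      P.real {ω | z < |Tstat R (1 / 2) μ σ n θ.ϑ n ω|}) :=
    ⟨1, Set.forall_mem_range.2 fun _ => measureReal_le_one⟩
  refine ⟨tendsto_of_tendsto_of_tendsto_of_le_of_le hlim tendsto_const_nhds (fun n => ?_)
      (fun _ => measureReal_le_one),
    tendsto_of_tendsto_of_tendsto_of_le_of_le hlim tendsto_const_nhds (fun n => ?_)
      (fun _ => Real.iSup_le (fun _ => measureReal_le_one) zero_le_one)⟩
  · exact measureReal_mono fun ω hω =>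
      hω.trans_le (Tstat_const_one_le_abs_Tstar R _ μ σ n hξvals n ω)
  · exact le_ciSup_of_le (hbddAbove n) (Policy.constOne P R)
      (measureReal_mono fun ω (hω : z < _) => show z < |_| from hω.trans_le (le_abs_self _))

/-- for `μ > 0` and `λ = 1/2`, the optimal policy asymptotically attains the
maximal rejection probability: both `P(|T_{n,1/2}(θ_n^*)| > z_{1-α/2}) → 1` and
`sup_{θ_n ∈ Θ} P(|T_{n,1/2}(θ_n)| > z_{1-α/2}) → 1` (hence the limits agree). -/
theorem stmt0
    {Ω : Type*} [MeasurableSpace Ω] (P : Measure Ω) [IsProbabilityMeasure P]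
    (R : ℕ → Ω → ℝ) (M μ σ : ℝ) (hM : 0 < M)
    (hRmeas : ∀ i, Measurable (R i))
    (hiid : iIndepFun R P)
    (hident : ∀ i, 1 ≤ i → Measure.map (R i) P = Measure.map (R 1) P)
    (hbdd : ∀ i, 1 ≤ i → ∀ᵐ ω ∂P, |R i ω| ≤ M)
    (hμ : μ = ∫ ω, R 1 ω ∂P)
    (hσ : 0 < σ) (hvar : σ ^ 2 = ∫ ω, (R 1 ω - μ) ^ 2 ∂P)
    (hμpos : 0 < μ)
    (ξ : Ω → ℝ) (hξmeas : Measurable ξ) (hξvals : ∀ ω, ξ ω = 0 ∨ ξ ω = 1)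
    (hξ1 : P {ω | ξ ω = 1} = 1 / 2) (hξ0 : P {ω | ξ ω = 0} = 1 / 2)
    (hξindep : IndepFun ξ (fun ω i => R i ω) P)
    (α z : ℝ) (hα : α ∈ Set.Ioo (0 : ℝ) 1) (hz : stdNormalCDF z = 1 - α / 2) :
    Tendsto (fun n : ℕ => (P {ω | z < |Tstar R (1 / 2) μ σ n ξ n ω|}).toReal)
        atTop (nhds 1) ∧
      Tendsto (fun n : ℕ =>
          ⨆ θ : Policy P R, (P {ω | z < |Tstat R (1 / 2) μ σ n θ.ϑ n ω|}).toReal)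
        atTop (nhds 1) :=
  stmt0_general P R M μ σ hRmeas hiid hident hbdd hμ hσ hvar hμpos ξ hξvals z
end

section
/- For every ω ∈ ℝ, σ₀ > 0 and a ≥ 0, the tail mass of the bandit (spike) density satisfies ∫_{{y ∈ ℝ : |y| > a}} f^{ω,σ₀}(y) dy = Φ((ω − a)/σ₀) + exp(2ωa/σ₀²)·Φ(−(ω + a)/σ₀). -/
open MeasureTheory ProbabilityTheory Filter

/-- The bandit (spike) density `f^{ω,σ₀}`. -/
noncomputable def spikeDensity (w s0 y : ℝ) : ℝ :=
  (1 / (Real.sqrt (2 * Real.pi) * s0)) * Real.exp (-(|y| - w) ^ 2 / (2 * s0 ^ 2))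
    - (w / s0 ^ 2) * Real.exp (2 * w * |y| / s0 ^ 2) * stdNormalCDF (-(|y| + w) / s0)

/-!
On `y ≥ 0` the density is `-½` times the derivative of
`T(y) = Φ((ω − y)/σ₀) + exp(2ωy/σ₀²) Φ(−(ω + y)/σ₀)`, and `T(y) → 0` as `y → ∞`: a Chernoff bound
`Φ(x) ≤ exp(l x + l²/2)` with `l` large beats the growth of `exp(2ωy/σ₀²)`, which also gives
integrability. Hence the mass of `(a, ∞)` is `T(a)/2`, and the density is even.
-/

open Set Real Topology

theorem hasDerivAt_setIntegral_Iic {f : ℝ → ℝ} (hf : Integrable f) (hc : Continuous f) (x : ℝ) :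
    HasDerivAt (fun y => ∫ t in Iic y, f t) (f x) x := by
  have h : (fun y => ∫ t in Iic y, f t)
      = fun y => (∫ t in Iic 0, f t) + ∫ t in (0 : ℝ)..y, f t := by
    funext y
    rw [← intervalIntegral.integral_Iic_sub_Iic hf.integrableOn hf.integrableOn]
    ring
  rw [h]
  exact (intervalIntegral.integral_hasDerivAt_right hf.intervalIntegrable
    (hc.stronglyMeasurableAtFilter _ _) hc.continuousAt).const_add _

theorem stdNormalCDF_integrand_eq :
    (fun t : ℝ => 1 / √(2 * π) * exp (-(t ^ 2) / 2)) = gaussianPDFReal 0 1 := by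
  ext t
  simp [gaussianPDFReal]

theorem stdNormalCDF_eq_measureReal (x : ℝ) :
    stdNormalCDF x = (gaussianReal 0 1).real (Iic x) := by
  rw [measureReal_def, gaussianReal_apply_eq_integral _ one_ne_zero, ENNReal.toReal_ofReal
    (setIntegral_nonneg measurableSet_Iic fun t _ => gaussianPDFReal_nonneg 0 1 t),
    stdNormalCDF, stdNormalCDF_integrand_eq]

theorem stdNormalCDF_nonneg (x : ℝ) : 0 ≤ stdNormalCDF x :=
  (stdNormalCDF_eq_measureReal x) ▸ measureReal_nonneg

theorem hasDerivAt_stdNormalCDF (x : ℝ) :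
    HasDerivAt stdNormalCDF (1 / √(2 * π) * exp (-(x ^ 2) / 2)) x := by
  have hc : Continuous fun t : ℝ => 1 / √(2 * π) * exp (-(t ^ 2) / 2) := by fun_prop
  have hi : Integrable fun t : ℝ => 1 / √(2 * π) * exp (-(t ^ 2) / 2) := by
    rw [stdNormalCDF_integrand_eq]; exact integrable_gaussianPDFReal 0 1
  exact hasDerivAt_setIntegral_Iic hi hc x

theorem continuous_stdNormalCDF : Continuous stdNormalCDF :=
  continuous_iff_continuousAt.mpr fun x => (hasDerivAt_stdNormalCDF x).continuousAt

theorem stdNormalCDF_le_exp (x : ℝ) {l : ℝ} (hl : 0 ≤ l) :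
    stdNormalCDF x ≤ exp (l * x + l ^ 2 / 2) := by
  have h := measure_le_le_exp_mul_mgf (μ := gaussianReal 0 1) (X := id) x (neg_nonpos.mpr hl)
    (integrable_exp_mul_gaussianReal (-l))
  rw [mgf_id_gaussianReal, ← exp_add] at h
  rw [stdNormalCDF_eq_measureReal]
  convert h using 2
  · rfl
  · rw [NNReal.coe_one]
    ring

-- Chernoff with `l = (|b| + 1) c` turns the exponent into `(b - |b| - 1) y ≤ -y`.
theorem exists_exp_mul_stdNormalCDF_le (b c d : ℝ) (hc : 0 < c) :
    ∃ C, ∀ y, 0 ≤ y → exp (b * y) * stdNormalCDF ((d - y) / c) ≤ C * exp (-y) := by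
  set l := (|b| + 1) * c
  refine ⟨exp ((|b| + 1) * d + l ^ 2 / 2), fun y hy => ?_⟩
  calc exp (b * y) * stdNormalCDF ((d - y) / c)
      ≤ exp (b * y) * exp (l * ((d - y) / c) + l ^ 2 / 2) :=
        mul_le_mul_of_nonneg_left (stdNormalCDF_le_exp _ (by positivity)) (exp_pos _).le
    _ = exp ((b - |b|) * y - y + ((|b| + 1) * d + l ^ 2 / 2)) := by
        rw [← exp_add]
        congr 1
        field_simp
        ring
    _ ≤ exp (-y + ((|b| + 1) * d + l ^ 2 / 2)) := by
        gcongr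
        nlinarith [le_abs_self b]
    _ = exp ((|b| + 1) * d + l ^ 2 / 2) * exp (-y) := by rw [← exp_add, add_comm]

theorem tendsto_exp_mul_stdNormalCDF_atTop (b c d : ℝ) (hc : 0 < c) :
    Tendsto (fun y => exp (b * y) * stdNormalCDF ((d - y) / c)) atTop (𝓝 0) := by
  obtain ⟨C, hC⟩ := exists_exp_mul_stdNormalCDF_le b c d hc
  have hnonneg (y : ℝ) : 0 ≤ exp (b * y) * stdNormalCDF ((d - y) / c) :=
    mul_nonneg (exp_pos _).le (stdNormalCDF_nonneg _)
  refine squeeze_zero' (.of_forall hnonneg) ((eventually_ge_atTop 0).mono hC) ?_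
  simpa using tendsto_exp_neg_atTop_nhds_zero.const_mul C

theorem integrableOn_exp_mul_stdNormalCDF_Ioi (b c d : ℝ) (hc : 0 < c) :
    IntegrableOn (fun y => exp (b * y) * stdNormalCDF ((d - y) / c)) (Ioi 0) := by
  obtain ⟨C, hC⟩ := exists_exp_mul_stdNormalCDF_le b c d hc
  have hcont : Continuous fun y => exp (b * y) * stdNormalCDF ((d - y) / c) := by
    have := continuous_stdNormalCDF; fun_prop
  refine Integrable.mono' ((exp_neg_integrableOn_Ioi 0 one_pos).const_mul C)
    hcont.aestronglyMeasurable
    ((ae_restrict_iff' measurableSet_Ioi).mpr (.of_forall fun y hy => ?_))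
  rw [Real.norm_of_nonneg (mul_nonneg (exp_pos _).le (stdNormalCDF_nonneg _)), neg_one_mul]
  exact hC y (le_of_lt hy)

noncomputable def spikeTail (w s0 y : ℝ) : ℝ :=
  stdNormalCDF ((w - y) / s0) + exp (2 * w * y / s0 ^ 2) * stdNormalCDF (-(w + y) / s0)

theorem hasDerivAt_spikeTail {w s0 y : ℝ} (hs0 : s0 ≠ 0) (hy : 0 ≤ y) :
    HasDerivAt (spikeTail w s0) (-(2 * spikeDensity w s0 y)) y := by
  have hΦ₁ := (hasDerivAt_stdNormalCDF ((w - y) / s0)).comp y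
    (((hasDerivAt_id y).const_sub w).div_const s0)
  have hΦ₂ := (hasDerivAt_stdNormalCDF (-(w + y) / s0)).comp y
    (((hasDerivAt_id y).const_add w).neg.div_const s0)
  have hE := ((((hasDerivAt_id y).const_mul (2 * w)).div_const (s0 ^ 2))).exp
  refine (hΦ₁.add (hE.mul hΦ₂)).congr_deriv ?_
  have h₁ : exp (-((w - y) / s0) ^ 2 / 2) = exp (-(y - w) ^ 2 / (2 * s0 ^ 2)) := by
    congr 1; field_simp; ring
  have h₂ : exp (2 * w * y / s0 ^ 2) * exp (-(-(w + y) / s0) ^ 2 / 2)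
      = exp (-(y - w) ^ 2 / (2 * s0 ^ 2)) := by
    rw [← exp_add]; congr 1; field_simp; ring
  simp only [spikeDensity, abs_of_nonneg hy, Function.comp_apply, Pi.neg_apply, id, mul_one]
  rw [add_comm y w]
  linear_combination (-(1 / √(2 * π) / s0)) * (h₁ + h₂)

theorem tendsto_spikeTail_atTop {w s0 : ℝ} (hs0 : 0 < s0) :
    Tendsto (spikeTail w s0) atTop (𝓝 0) := by
  have h := (tendsto_exp_mul_stdNormalCDF_atTop 0 s0 w hs0).add
    (tendsto_exp_mul_stdNormalCDF_atTop (2 * w / s0 ^ 2) s0 (-w) hs0)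
  simp only [zero_mul, exp_zero, one_mul, add_zero] at h
  convert h using 2 with y
  rw [spikeTail, mul_div_right_comm (2 * w) y, neg_add']

theorem integrableOn_spikeDensity_Ioi {w s0 : ℝ} (hs0 : 0 < s0) :
    IntegrableOn (spikeDensity w s0) (Ioi 0) := by
  have hG : Integrable fun y => 1 / (√(2 * π) * s0) * exp (-(y - w) ^ 2 / (2 * s0 ^ 2)) := by
    refine (((integrable_exp_neg_mul_sq (b := 1 / (2 * s0 ^ 2)) (by positivity)).comp_sub_right
      w).const_mul (1 / (√(2 * π) * s0))).congr (.of_forall fun y => ?_)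
    simp only
    congr 2
    ring
  have hE := (integrableOn_exp_mul_stdNormalCDF_Ioi (2 * w / s0 ^ 2) s0 (-w) hs0).const_mul
    (w / s0 ^ 2)
  refine (hG.integrableOn.sub hE).congr_fun (fun y hy => ?_) measurableSet_Ioi
  rw [Pi.sub_apply, spikeDensity, abs_of_pos (mem_Ioi.mp hy), mul_assoc,
    mul_div_right_comm (2 * w) y, add_comm y w, neg_add']

theorem integral_Ioi_spikeDensity {w s0 a : ℝ} (hs0 : 0 < s0) (ha : 0 ≤ a) :
    ∫ y in Ioi a, spikeDensity w s0 y = spikeTail w s0 a / 2 := by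
  have h := integral_Ioi_of_hasDerivAt_of_tendsto
    (hasDerivAt_spikeTail (w := w) hs0.ne' ha).continuousAt.continuousWithinAt
    (fun y hy => hasDerivAt_spikeTail hs0.ne' (ha.trans (le_of_lt hy)))
    (((integrableOn_spikeDensity_Ioi hs0).mono_set (Ioi_subset_Ioi ha)).const_mul 2).neg
    (tendsto_spikeTail_atTop hs0)
  rw [integral_neg, integral_const_mul] at h
  linarith

theorem setIntegral_lt_abs_eq_two_mul {f : ℝ → ℝ} (hf : ∀ y, f |y| = f y) {a : ℝ} (ha : 0 ≤ a) :
    ∫ y in {y | a < |y|}, f y = 2 * ∫ y in Ioi a, f y := by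
  calc ∫ y in {y | a < |y|}, f y = ∫ y, (Ioi a).indicator f |y| := by
        rw [← integral_indicator (measurableSet_lt measurable_const continuous_abs.measurable)]
        congr 1
        ext y
        simp only [indicator, mem_ofPred_eq, mem_Ioi, hf]
    _ = 2 * ∫ y in Ioi 0, (Ioi a).indicator f y := integral_comp_abs
    _ = 2 * ∫ y in Ioi a, f y := by
        rw [setIntegral_indicator measurableSet_Ioi, Ioi_inter_Ioi, sup_eq_right.mpr ha]

/-- the tail mass of the bandit (spike) density:
`∫_{|y| > a} f^{ω,σ₀}(y) dy = Φ((ω-a)/σ₀) + exp(2ωa/σ₀²) Φ(-(ω+a)/σ₀)`. -/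
theorem stmt17 (w s0 a : ℝ) (hs0 : 0 < s0) (ha : 0 ≤ a) :
    ∫ y in {y : ℝ | a < |y|}, spikeDensity w s0 y =
      stdNormalCDF ((w - a) / s0) +
        Real.exp (2 * w * a / s0 ^ 2) * stdNormalCDF (-(w + a) / s0) := by
  rw [setIntegral_lt_abs_eq_two_mul (fun y => by simp only [spikeDensity, abs_abs]) ha,
    integral_Ioi_spikeDensity hs0 ha, spikeTail]
  ring
end

section
/- Let φ : ℝ → ℝ be bounded, continuous and even, and for h > 0 define the Gaussian mollification φ_h(x) = ∫_ℝ (1/√(2π))·φ(x + hy)·exp(−y²/2) dy. Then φ_h is even and differentiable on ℝ, its derivative satisfies φ_h′(x) = ∫_0^∞ (1/(√(2π)·h³))·(φ(y + x) − φ(y − x))·y·exp(−y²/(2h²)) dy for every x ∈ ℝ, and if in addition φ is strictly decreasing on (0, ∞), then sgn(φ_h′(x)) = −sgn(x) for every x ∈ ℝ. -/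
open MeasureTheory ProbabilityTheory Filter

/-!
Substituting `u = x + h y` turns `φ_h` into the convolution of `φ` with a Gaussian of variance
`h²`. Since `φ` is bounded, it can be differentiated under the integral sign: for `x` near `x₀`,
`|u - x| exp (-(u - x)² / (2h²))` is dominated by a fixed integrable Gaussian in `u - x₀`.
Folding the resulting integral onto `(0, ∞)` with the evenness of `φ` gives the stated formula,
which is odd in `x`. For `0 < x` and `0 < y ≠ x` one has `0 < |y - x| < y + x`, so if `φ`
decreases strictly on `(0, ∞)` then `φ (y + x) < φ |y - x| = φ (y - x)`: the integrand is
negative off a null set.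
-/

open Real Set

lemma integral_pos_of_ae_pos {α : Type*} [MeasurableSpace α] {μ : Measure α} [NeZero μ]
    {f : α → ℝ} (hf : Integrable f μ) (hpos : ∀ᵐ a ∂μ, 0 < f a) : 0 < ∫ a, f a ∂μ := by
  have hnonneg : 0 ≤ᵐ[μ] f := hpos.mono fun _ => le_of_lt
  refine (integral_nonneg_of_ae hnonneg).lt_of_ne fun h0 => ?_
  have hzero := (integral_eq_zero_iff_of_nonneg_ae hnonneg hf).1 h0.symm
  obtain ⟨a, ha, ha0⟩ := (hpos.and hzero).exists
  exact ha.ne' ha0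

lemma Real.sign_eq_neg_sign_of_odd {g : ℝ → ℝ} (hodd : ∀ x, g (-x) = -g x)
    (hneg : ∀ x, 0 < x → g x < 0) (x : ℝ) : Real.sign (g x) = -Real.sign x := by
  rcases lt_trichotomy x 0 with hx | rfl | hx
  · have := hneg (-x) (neg_pos.2 hx)
    rw [hodd] at this
    rw [Real.sign_of_pos (by linarith), Real.sign_of_neg hx, neg_neg]
  · have := hodd 0
    rw [neg_zero] at this
    rw [show g 0 = 0 by linarith, Real.sign_zero, neg_zero]
  · rw [Real.sign_of_neg (hneg x hx), Real.sign_of_pos hx]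

lemma integral_eq_setIntegral_Ioi_add_comp_neg {E : Type*} [NormedAddCommGroup E]
    [NormedSpace ℝ E] {f : ℝ → E} (hf : Integrable f) :
    ∫ x, f x = ∫ x in Ioi 0, (f x + f (-x)) := by
  rw [integral_add hf.integrableOn hf.comp_neg.integrableOn, integral_comp_neg_Ioi, neg_zero,
    add_comm, intervalIntegral.integral_Iic_add_Ioi hf.integrableOn hf.integrableOn]

lemma abs_sub_mul_exp_neg_mul_sq_le {b u x x₀ : ℝ} (hb : 0 ≤ b) (hx : |x - x₀| < 1) :
    |(u - x) * exp (-b * (u - x) ^ 2)|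
      ≤ exp b * ((|u - x₀| + 1) * exp (-(b / 2) * (u - x₀) ^ 2)) := by
  have habs : |u - x| ≤ |u - x₀| + 1 := by
    calc |u - x| ≤ |u - x₀| + |x - x₀| := by
          simpa [abs_sub_comm x x₀] using abs_sub_le u x₀ x
      _ ≤ |u - x₀| + 1 := by linarith
  -- `(u - x₀)² ≤ 2 (u - x)² + 2 (x - x₀)²`, and `(x - x₀)² < 1`
  have hexp : exp (-b * (u - x) ^ 2) ≤ exp b * exp (-(b / 2) * (u - x₀) ^ 2) := by
    rw [← exp_add, exp_le_exp]
    have hsq : (x - x₀) ^ 2 ≤ 1 := by nlinarith [sq_abs (x - x₀), abs_nonneg (x - x₀)]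
    nlinarith [sq_nonneg (u - x + (x - x₀)), sq_nonneg (u - x - (x - x₀))]
  rw [abs_mul, abs_exp, mul_left_comm]
  exact mul_le_mul habs hexp (exp_pos _).le (by positivity)

lemma integrable_abs_sub_add_one_mul_exp_neg_mul_sq {b : ℝ} (hb : 0 < b) (a : ℝ) :
    Integrable fun u => (|u - a| + 1) * exp (-b * (u - a) ^ 2) := by
  have hsum := (integrable_mul_exp_neg_mul_sq hb).abs.add (integrable_exp_neg_mul_sq hb)
  simpa only [Pi.add_apply, abs_mul, abs_exp, add_mul, one_mul] using hsum.comp_sub_right a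

lemma hasDerivAt_integral_mul_exp_neg_mul_sq_sub {ψ : ℝ → ℝ} (hψ : AEStronglyMeasurable ψ)
    {B : ℝ} (hB : ∀ u, |ψ u| ≤ B) {b : ℝ} (hb : 0 < b) (x₀ : ℝ) :
    HasDerivAt (fun x => ∫ u, ψ u * exp (-b * (u - x) ^ 2))
      (∫ u, ψ u * (2 * b * ((u - x₀) * exp (-b * (u - x₀) ^ 2)))) x₀ := by
  have hψB : ∀ᵐ u, ‖ψ u‖ ≤ B := ae_of_all _ hB
  have hmeas : ∀ x, AEStronglyMeasurable fun u => ψ u * exp (-b * (u - x) ^ 2) := fun x =>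
    hψ.mul (by fun_prop : Continuous fun u => exp (-b * (u - x) ^ 2)).aestronglyMeasurable
  refine (hasDerivAt_integral_of_dominated_loc_of_deriv_le (Metric.ball_mem_nhds x₀ one_pos)
    (Eventually.of_forall hmeas)
    (((integrable_exp_neg_mul_sq hb).comp_sub_right x₀).bdd_mul hψ hψB)
    (F' := fun x u => ψ u * (2 * b * ((u - x) * exp (-b * (u - x) ^ 2))))
    (hψ.mul (by fun_prop : Continuous _).aestronglyMeasurable)
    (bound := fun u => B * (2 * b * (exp b * ((|u - x₀| + 1) * exp (-(b / 2) * (u - x₀) ^ 2)))))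
    (ae_of_all _ fun u x hx => ?_)
    ((integrable_abs_sub_add_one_mul_exp_neg_mul_sq (half_pos hb) x₀).const_mul _ |>.const_mul _
      |>.const_mul _)
    (ae_of_all _ fun u x _ => ?_)).2
  · rw [Real.norm_eq_abs, abs_mul, abs_mul, abs_of_pos (by positivity : 0 < 2 * b)]
    exact mul_le_mul (hB u) (mul_le_mul_of_nonneg_left
      (abs_sub_mul_exp_neg_mul_sq_le hb.le (Metric.mem_ball.1 hx)) (by positivity))
      (by positivity) ((abs_nonneg _).trans (hB u))
  · have hsq : HasDerivAt (fun x => -b * (u - x) ^ 2) (2 * b * (u - x)) x :=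
      ((((hasDerivAt_id' x).const_sub u).pow 2).const_mul (-b)).congr_deriv (by ring)
    exact (hsq.exp.const_mul (ψ u)).congr_deriv (by ring)

noncomputable def gaussianMollification (φ : ℝ → ℝ) (h x : ℝ) : ℝ :=
  ∫ y, (1 / √(2 * π)) * φ (x + h * y) * exp (-(y ^ 2) / 2)

noncomputable def gaussianMollificationDeriv (φ : ℝ → ℝ) (h x : ℝ) : ℝ :=
  ∫ y in Ioi 0, (1 / (√(2 * π) * h ^ 3)) * (φ (y + x) - φ (y - x)) * y *
    exp (-(y ^ 2) / (2 * h ^ 2))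

section Mollification

variable {φ : ℝ → ℝ} {h : ℝ}

lemma gaussianMollification_neg (he : ∀ x, φ (-x) = φ x) (h x : ℝ) :
    gaussianMollification φ h (-x) = gaussianMollification φ h x := by
  rw [gaussianMollification, ← integral_neg_eq_self]
  congr 1 with y
  rw [show -x + h * -y = -(x + h * y) by ring, he, neg_sq]

lemma gaussianMollification_eq_integral (hh : 0 < h) (x : ℝ) :
    gaussianMollification φ h x =
      (√(2 * π) * h)⁻¹ * ∫ u, φ u * exp (-(2 * h ^ 2)⁻¹ * (u - x) ^ 2) := by
  set G : ℝ → ℝ := fun u => φ u * exp (-(2 * h ^ 2)⁻¹ * (u - x) ^ 2)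
  calc gaussianMollification φ h x = ∫ y, (√(2 * π))⁻¹ * G (x + h * y) := by
        refine integral_congr_ae (ae_of_all _ fun y => ?_)
        simp only [G, add_sub_cancel_left]
        field_simp
    _ = (√(2 * π))⁻¹ * |h⁻¹| * ∫ t, G (x + t) := by
        rw [integral_const_mul, Measure.integral_comp_mul_left (fun t => G (x + t)), smul_eq_mul,
          mul_assoc]
    _ = (√(2 * π) * h)⁻¹ * ∫ u, G u := by
        rw [integral_add_left_eq_self G x, abs_of_pos (inv_pos.2 hh), mul_inv]

lemma integral_mul_sub_mul_exp_eq_setIntegral_Ioi (hc : Continuous φ) {B : ℝ}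
    (hB : ∀ x, |φ x| ≤ B) (he : ∀ x, φ (-x) = φ x) {b : ℝ} (hb : 0 < b) (x : ℝ) :
    ∫ u, φ u * ((u - x) * exp (-b * (u - x) ^ 2)) =
      ∫ y in Ioi 0, (φ (y + x) - φ (y - x)) * (y * exp (-b * y ^ 2)) := by
  have hint : Integrable fun y => φ (y + x) * (y * exp (-b * y ^ 2)) :=
    (integrable_mul_exp_neg_mul_sq hb).bdd_mul (by fun_prop : Continuous _).aestronglyMeasurable
      (ae_of_all _ fun y => hB (y + x))
  rw [← integral_add_right_eq_self _ x]
  simp only [add_sub_cancel_right]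
  rw [integral_eq_setIntegral_Ioi_add_comp_neg hint]
  congr 1 with y
  rw [show -y + x = -(y - x) by ring, he, neg_sq]
  ring

lemma hasDerivAt_gaussianMollification (hc : Continuous φ) {B : ℝ} (hB : ∀ x, |φ x| ≤ B)
    (he : ∀ x, φ (-x) = φ x) (hh : 0 < h) (x : ℝ) :
    HasDerivAt (gaussianMollification φ h) (gaussianMollificationDeriv φ h x) x := by
  set b : ℝ := (2 * h ^ 2)⁻¹
  have hb : 0 < b := by positivity
  rw [funext (gaussianMollification_eq_integral hh)]
  refine ((hasDerivAt_integral_mul_exp_neg_mul_sq_sub hc.aestronglyMeasurable hB hb x).const_mul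
    (√(2 * π) * h)⁻¹).congr_deriv ?_
  have hpull : ∫ u, φ u * (2 * b * ((u - x) * exp (-b * (u - x) ^ 2))) =
      2 * b * ∫ u, φ u * ((u - x) * exp (-b * (u - x) ^ 2)) := by
    rw [← integral_const_mul]
    congr 1 with u
    ring
  rw [hpull, integral_mul_sub_mul_exp_eq_setIntegral_Ioi hc hB he hb, gaussianMollificationDeriv,
    ← integral_const_mul, ← integral_const_mul]
  congr 1 with y
  simp only [b]
  field_simp

lemma gaussianMollificationDeriv_neg (h x : ℝ) :
    gaussianMollificationDeriv φ h (-x) = -gaussianMollificationDeriv φ h x := by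
  rw [gaussianMollificationDeriv, gaussianMollificationDeriv, ← integral_neg]
  congr 1 with y
  rw [sub_neg_eq_add, ← sub_eq_add_neg]
  ring

lemma StrictAntiOn.apply_add_lt_apply_sub_of_even (hφ : StrictAntiOn φ (Ioi 0))
    (he : ∀ x, φ (-x) = φ x) {x y : ℝ} (hx : 0 < x) (hy : 0 < y) (hxy : y ≠ x) :
    φ (y + x) < φ (y - x) := by
  have habs : φ |y - x| = φ (y - x) := by
    rcases abs_choice (y - x) with hyx | hyx <;> rw [hyx]
    exact he _
  rw [← habs]
  refine hφ (abs_pos.2 (sub_ne_zero.2 hxy)) (add_pos hy hx) ?_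
  rw [abs_sub_lt_iff]
  constructor <;> linarith

lemma gaussianMollificationDeriv_neg_of_pos (hc : Continuous φ) {B : ℝ} (hB : ∀ x, |φ x| ≤ B)
    (he : ∀ x, φ (-x) = φ x) (hφ : StrictAntiOn φ (Ioi 0)) (hh : 0 < h) {x : ℝ} (hx : 0 < x) :
    gaussianMollificationDeriv φ h x < 0 := by
  set f : ℝ → ℝ := fun y => (1 / (√(2 * π) * h ^ 3)) * (φ (y + x) - φ (y - x)) * y *
    exp (-(y ^ 2) / (2 * h ^ 2))
  have hint : IntegrableOn f (Ioi 0) := by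
    have hgauss := integrable_mul_exp_neg_mul_sq (inv_pos.2 (by positivity : 0 < 2 * h ^ 2))
    refine Integrable.integrableOn ((hgauss.const_mul (1 / (√(2 * π) * h ^ 3))).bdd_mul
      (c := B + B) (by fun_prop : Continuous fun y => φ (y + x) - φ (y - x)).aestronglyMeasurable
      (ae_of_all _ fun y => (abs_sub _ _).trans (add_le_add (hB _) (hB _))) |>.congr ?_)
    refine ae_of_all _ fun y => ?_
    simp only [f]
    ring_nf
  have hneg : ∀ᵐ y ∂volume.restrict (Ioi 0), 0 < -f y := by
    have hne : ∀ᵐ y ∂volume.restrict (Ioi (0 : ℝ)), y ≠ x :=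
      ae_restrict_of_ae (compl_mem_ae_iff.2 (measure_singleton x))
    filter_upwards [hne, ae_restrict_mem measurableSet_Ioi] with y hyx hy
    have hlt := hφ.apply_add_lt_apply_sub_of_even he hx hy hyx
    have : f y < 0 := mul_neg_of_neg_of_pos (mul_neg_of_neg_of_pos
      (mul_neg_of_pos_of_neg (by positivity) (sub_neg.2 hlt)) hy) (exp_pos _)
    linarith
  have : NeZero (volume.restrict (Ioi (0 : ℝ))) := ⟨by simp⟩
  have hpos := integral_pos_of_ae_pos (f := fun y => -f y) hint.neg hneg
  rw [integral_neg, neg_pos] at hpos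
  exact hpos

end Mollification

/-- the Gaussian mollification `φ_h` of a bounded continuous even `φ` is even and
differentiable, its derivative has the stated integral form, and if `φ` is strictly decreasing on
`(0,∞)` then `sgn(φ_h′(x)) = -sgn(x)` for all `x`. -/
theorem stmt19 (φ : ℝ → ℝ) (hb : ∃ B : ℝ, ∀ x, |φ x| ≤ B) (hc : Continuous φ)
    (he : ∀ x, φ (-x) = φ x) (h : ℝ) (hh : 0 < h)
    (φh : ℝ → ℝ)
    (hφh : ∀ x, φh x =
      ∫ y, (1 / Real.sqrt (2 * Real.pi)) * φ (x + h * y) * Real.exp (-(y ^ 2) / 2)) :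
    (∀ x, φh (-x) = φh x) ∧
      Differentiable ℝ φh ∧
      (∀ x, deriv φh x =
        ∫ y in Set.Ioi (0 : ℝ),
          (1 / (Real.sqrt (2 * Real.pi) * h ^ 3)) * (φ (y + x) - φ (y - x)) * y *
            Real.exp (-(y ^ 2) / (2 * h ^ 2))) ∧
      (StrictAntiOn φ (Set.Ioi 0) → ∀ x, Real.sign (deriv φh x) = - Real.sign x) := by
  obtain ⟨B, hB⟩ := hb
  obtain rfl : φh = gaussianMollification φ h := funext hφh
  have hderiv x := (hasDerivAt_gaussianMollification hc hB he hh x).deriv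
  refine ⟨gaussianMollification_neg he h,
    fun x => (hasDerivAt_gaussianMollification hc hB he hh x).differentiableAt, hderiv,
    fun hφ x => ?_⟩
  rw [hderiv]
  exact Real.sign_eq_neg_sign_of_odd (gaussianMollificationDeriv_neg h)
    (fun _ => gaussianMollificationDeriv_neg_of_pos hc hB he hφ hh) x
end
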